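/- arXiv:1407.3295 — 4 statements merged into one kernel-verified Lean document; each statement's English description precedes it below -/
import Mathlib

section
/- In the diagram setup, let Mₖ be the mapping cone of iₖ : Aₖ → Bₖ, i.e. Mₖⁿ = Bₖⁿ ⊕ Aₖⁿ⁺¹ with differential (b,a) ↦ (d_{Bₖ}b + iₖ(a), −d_{Aₖ}a). Then the family of morphisms hⁿ : M₁ⁿ → M₂ⁿ given in matrix form by hⁿ(b,a) = (fⁿ(b), ψⁿ(p₁ⁿ(b)) + eⁿ⁺¹(a)) is a morphism of cochain complexes h : M₁ → M₂, i.e. it commutes with the cone differentials in every degree. -/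
open CategoryTheory CategoryTheory.Limits

/-- In the diagram setup, let `Mₖ` be the mapping cone of `iₖ : Aₖ → Bₖ`,
i.e. `Mₖⁿ = Bₖⁿ ⊕ Aₖⁿ⁺¹` with differential `(b,a) ↦ (d b + iₖ a, −d a)`.  Then the family
`hⁿ(b,a) = (fⁿ b, ψⁿ(p₁ⁿ b) + eⁿ⁺¹ a)` is a morphism of cochain complexes `M₁ ⟶ M₂`:
it commutes with the cone differentials in every degree. -/
theorem stmt2 {𝒜 : Type*} [Category 𝒜] [Abelian 𝒜]
    (A₁ B₁ C₁ A₂ B₂ C₂ : CochainComplex 𝒜 ℤ)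
    (i₁ : A₁ ⟶ B₁) (p₁ : B₁ ⟶ C₁) (i₂ : A₂ ⟶ B₂) (p₂ : B₂ ⟶ C₂)
    (h₁ : ∀ n : ℤ, i₁.f n ≫ p₁.f n = 0)
    (h₂ : ∀ n : ℤ, i₂.f n ≫ p₂.f n = 0)
    (hS₁ : ∀ n : ℤ, (ShortComplex.mk (i₁.f n) (p₁.f n) (h₁ n)).ShortExact)
    (hS₂ : ∀ n : ℤ, (ShortComplex.mk (i₂.f n) (p₂.f n) (h₂ n)).ShortExact)
    (e : A₁ ⟶ A₂) (g : C₁ ⟶ C₂)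
    (f : ∀ n : ℤ, B₁.X n ⟶ B₂.X n)
    (hfi : ∀ n : ℤ, i₁.f n ≫ f n = e.f n ≫ i₂.f n)
    (hpf : ∀ n : ℤ, f n ≫ p₂.f n = p₁.f n ≫ g.f n)
    -- ψ : C₁ ⟶ A₂[1] is the unique morphism of complexes with i₂ⁿ⁺¹ ∘ ψⁿ ∘ p₁ⁿ = φⁿ :
    (ψ : ∀ n : ℤ, C₁.X n ⟶ A₂.X (n + 1))
    (hψfac : ∀ n : ℤ, p₁.f n ≫ ψ n ≫ i₂.f (n + 1)
      = B₁.d n (n + 1) ≫ f (n + 1) - f n ≫ B₂.d n (n + 1))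
    (hψd : ∀ n : ℤ, ψ n ≫ (-(A₂.d (n + 1) (n + 1 + 1))) = C₁.d n (n + 1) ≫ ψ (n + 1))
    -- the cone differentials dM₁ⁿ : B₁ⁿ ⊞ A₁ⁿ⁺¹ ⟶ B₁ⁿ⁺¹ ⊞ A₁ⁿ⁺², dM₂ⁿ likewise:
    (dM₁ : ∀ n : ℤ, (B₁.X n ⊞ A₁.X (n + 1)) ⟶ (B₁.X (n + 1) ⊞ A₁.X (n + 1 + 1)))
    (hdM₁ : ∀ n : ℤ, dM₁ n = biprod.lift
      (biprod.fst ≫ B₁.d n (n + 1) + biprod.snd ≫ i₁.f (n + 1))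
      (biprod.snd ≫ (-(A₁.d (n + 1) (n + 1 + 1)))))
    (dM₂ : ∀ n : ℤ, (B₂.X n ⊞ A₂.X (n + 1)) ⟶ (B₂.X (n + 1) ⊞ A₂.X (n + 1 + 1)))
    (hdM₂ : ∀ n : ℤ, dM₂ n = biprod.lift
      (biprod.fst ≫ B₂.d n (n + 1) + biprod.snd ≫ i₂.f (n + 1))
      (biprod.snd ≫ (-(A₂.d (n + 1) (n + 1 + 1)))))
    -- the family h :
    (h : ∀ n : ℤ, (B₁.X n ⊞ A₁.X (n + 1)) ⟶ (B₂.X n ⊞ A₂.X (n + 1)))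
    (hh : ∀ n : ℤ, h n = biprod.lift (biprod.fst ≫ f n)
      (biprod.fst ≫ p₁.f n ≫ ψ n + biprod.snd ≫ e.f (n + 1))) :
    ∀ n : ℤ, h n ≫ dM₂ n = dM₁ n ≫ h (n + 1) := by
  intro n
  have hfac := hψfac n
  have h3 := p₁.comm n (n+1)
  have h4 := e.comm (n+1) (n+1+1)
  have h5 := h₁ (n+1)
  have h1' : ψ n ≫ A₂.d (n+1) (n+1+1) = -(C₁.d n (n+1) ≫ ψ (n+1)) := by
    rw [← hψd n]; simp
  rw [hh n, hh (n+1), hdM₁ n, hdM₂ n]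
  apply biprod.hom_ext
  · simp only [Category.assoc, biprod.lift_fst, Preadditive.comp_add,
      Preadditive.add_comp, biprod.lift_fst_assoc, biprod.lift_snd_assoc,
      Preadditive.comp_neg, Preadditive.neg_comp]
    rw [hfi (n+1), hfac]
    simp only [Preadditive.comp_sub, Preadditive.comp_add, Category.assoc]
    abel
  · simp only [Category.assoc, biprod.lift_snd, Preadditive.comp_add,
      Preadditive.add_comp, biprod.lift_snd_assoc, biprod.lift_fst_assoc,
      Preadditive.comp_neg, Preadditive.neg_comp]
    rw [h1', reassoc_of% h5, h4]
    simp only [Preadditive.comp_neg, neg_add, neg_neg, zero_comp, comp_zero,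
      Limits.comp_zero, Limits.zero_comp, add_zero, zero_add]
    rw [reassoc_of% h3]
end

section
/- In the diagram setup, let δₖ : Cₖ → Aₖ[1] (k = 1,2) denote the connecting morphism in the derived category D(𝒜) associated with the degreewise short exact sequence 0 → Aₖ → Bₖ → Cₖ → 0, i.e. the unique morphism in D(𝒜) satisfying δₖ ∘ pₖ′ = qₖ, where pₖ′ : Cone(iₖ) → Cₖ is the canonical quasi-isomorphism and qₖ : Cone(iₖ) → Aₖ[1] the canonical projection. Then, as morphisms C₁ → A₂[1] in the derived category D(𝒜), one has δ₂ ∘ g − e[1] ∘ δ₁ = ψ. -/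
open CategoryTheory CategoryTheory.Limits

variable {𝒜 : Type*} [Category 𝒜] [Abelian 𝒜]

/-- The mapping cone of a chain map `i : A ⟶ B` of ℤ-indexed cochain complexes:
`Mⁿ = Bⁿ ⊞ Aⁿ⁺¹`, with differential `(b, a) ↦ (d b + i a, −d a)`. -/
noncomputable def paperCone {A B : CochainComplex 𝒜 ℤ} (i : A ⟶ B) :
    CochainComplex 𝒜 ℤ :=
  CochainComplex.of (fun n => B.X n ⊞ A.X (n + 1))
    (fun n => biprod.lift (biprod.fst ≫ B.d n (n + 1) + biprod.snd ≫ i.f (n + 1))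
      (biprod.snd ≫ (-(A.d (n + 1) (n + 1 + 1)))))
    (fun n => by
      apply biprod.hom_ext
      · simp [HomologicalComplex.Hom.comm]
      · simp)

/-- The canonical chain map `paperCone i ⟶ C`, `(b, a) ↦ p b`, for a degreewise
short exact sequence `0 → A → B → C → 0`. -/
noncomputable def paperConeP {A B C : CochainComplex 𝒜 ℤ} (i : A ⟶ B) (p : B ⟶ C)
    (h0 : ∀ n : ℤ, i.f n ≫ p.f n = 0) :
    paperCone i ⟶ C where
  f n := biprod.fst ≫ p.f n
  comm' n m hnm := by
    change n + 1 = m at hnm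
    subst hnm
    dsimp [paperCone]
    rw [CochainComplex.of_d]
    simp [HomologicalComplex.Hom.comm, h0]

/-- The canonical chain map `paperCone i ⟶ A[1]`, `(b, a) ↦ a`. -/
noncomputable def paperConeQ {A B : CochainComplex 𝒜 ℤ} (i : A ⟶ B) :
    paperCone i ⟶ (CategoryTheory.shiftFunctor (CochainComplex 𝒜 ℤ) (1 : ℤ)).obj A where
  f n := biprod.snd
  comm' n m hnm := by
    change n + 1 = m at hnm
    subst hnm
    dsimp [paperCone]
    rw [CochainComplex.of_d]
    simp

/-!
The connecting morphism `δₖ` is `qₖ ∘ (pₖ′)⁻¹`. The maps `f` and `ψ` assemble into a chain map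
`F : Cone(i₁) → Cone(i₂)`, `(b, a) ↦ (f b, ψ (p₁ b) + e a)`: the defect `φ = i₂ ψ p₁` of `f` is
exactly what the second coordinate compensates. Then `p₂′ F = g p₁′` and `q₂ F = ψ p₁′ + e[1] q₁`,
and cancelling the quasi-isomorphism `p₁′` in `D(𝒜)` gives `δ₂ g − e[1] δ₁ = ψ`.
That `p₁′` is a quasi-isomorphism is Mathlib's `mappingCone.quasiIso_descShortComplex`,
transported along the degreewise isomorphism `Cone(i₁) ≅ mappingCone i₁`.
-/

lemma comp_sub_comp_eq_of_epi {𝒞 : Type*} [Category 𝒞] [Preadditive 𝒞]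
    {M₁ M₂ X₁ X₂ Y₁ Y₂ : 𝒞} {π₁ : M₁ ⟶ X₁} [Epi π₁] {π₂ : M₂ ⟶ X₂} {q₁ : M₁ ⟶ Y₁}
    {q₂ : M₂ ⟶ Y₂} {F : M₁ ⟶ M₂} {g : X₁ ⟶ X₂} {e : Y₁ ⟶ Y₂} {ψ : X₁ ⟶ Y₂}
    {δ₁ : X₁ ⟶ Y₁} {δ₂ : X₂ ⟶ Y₂} (hδ₁ : π₁ ≫ δ₁ = q₁) (hδ₂ : π₂ ≫ δ₂ = q₂)
    (hπ : F ≫ π₂ = π₁ ≫ g) (hq : F ≫ q₂ = π₁ ≫ ψ + q₁ ≫ e) :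
    g ≫ δ₂ - δ₁ ≫ e = ψ := by
  rw [← cancel_epi π₁, Preadditive.comp_sub, ← reassoc_of% hπ, hδ₂, hq, reassoc_of% hδ₁,
    add_sub_cancel_right]

namespace CochainComplex

section

variable {A B C : CochainComplex 𝒜 ℤ} (i : A ⟶ B)

noncomputable def mappingConeXIsoBiprod (n : ℤ) : (mappingCone i).X n ≅ B.X n ⊞ A.X (n + 1) where
  hom := biprod.lift ((mappingCone.snd i).v n n (add_zero n))
    ((mappingCone.fst i : HomComplex.Cochain _ _ 1).v n (n + 1) rfl)
  inv := biprod.desc ((mappingCone.inr i).f n) ((mappingCone.inl i).v (n + 1) n (by omega))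
  hom_inv_id := by simpa [add_comm] using mappingCone.id_X i n (n + 1) rfl
  inv_hom_id := by apply biprod.hom_ext' <;> apply biprod.hom_ext <;> simp

noncomputable def mappingConeIsoPaperCone : mappingCone i ≅ paperCone i :=
  HomologicalComplex.Hom.isoOfComponents (mappingConeXIsoBiprod i) (fun n m hnm => by
    change n + 1 = m at hnm
    subst hnm
    dsimp only [paperCone]
    rw [of_d, mappingCone.ext_from_iff i (n + 1) n rfl]
    constructor <;> apply biprod.hom_ext <;>
      simp [mappingConeXIsoBiprod,
        mappingCone.inl_v_d_assoc i (n + 1) n (n + 1 + 1) (by omega) (by omega)])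

variable (p : B ⟶ C) (h0 : ∀ n, i.f n ≫ p.f n = 0)

lemma mappingConeIsoPaperCone_hom_comp_paperConeP :
    (mappingConeIsoPaperCone i).hom ≫ paperConeP i p h0
      = mappingCone.descShortComplex (ShortComplex.mk i p (by ext n; exact h0 n)) := by
  ext n
  have hf : ((mappingConeIsoPaperCone i).hom ≫ paperConeP i p h0).f n =
      (mappingCone.snd i).v n n (add_zero n) ≫ p.f n := biprod.lift_fst_assoc _ _ _
  rw [hf]
  apply mappingCone.ext_from i (n + 1) n rfl
  · simpa using (mappingCone.inl_v_descShortComplex_f (ShortComplex.mk i p _) _ n (by omega)).symm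
  · simpa using (mappingCone.inr_f_descShortComplex_f (ShortComplex.mk i p _) n).symm

lemma quasiIso_paperConeP (hS : ∀ n, (ShortComplex.mk (i.f n) (p.f n) (h0 n)).ShortExact) :
    QuasiIso (paperConeP i p h0) := by
  rw [← quasiIso_iff_comp_left (mappingConeIsoPaperCone i).hom,
    mappingConeIsoPaperCone_hom_comp_paperConeP]
  exact mappingCone.quasiIso_descShortComplex
    (HomologicalComplex.shortExact_of_degreewise_shortExact _ hS)

end

lemma shiftOne_hom_comm {K L : CochainComplex 𝒜 ℤ}
    (φ : K ⟶ (CategoryTheory.shiftFunctor (CochainComplex 𝒜 ℤ) (1 : ℤ)).obj L) (n : ℤ) :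
    K.d n (n + 1) ≫ φ.f (n + 1) = -(φ.f n ≫ L.d (n + 1) (n + 1 + 1)) := by
  have h := φ.comm n (n + 1)
  rw [shiftFunctor_obj_d'] at h
  simp only [Int.negOnePow_one, Units.neg_smul, one_smul] at h
  rw [← h]
  exact Preadditive.comp_neg _ _

section

variable {A₁ B₁ C₁ A₂ B₂ : CochainComplex 𝒜 ℤ} {i₁ : A₁ ⟶ B₁} {p₁ : B₁ ⟶ C₁} {i₂ : A₂ ⟶ B₂}
  {e : A₁ ⟶ A₂} {f : ∀ n, B₁.X n ⟶ B₂.X n} {ψ : ∀ n, C₁.X n ⟶ A₂.X (n + 1)}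

noncomputable def paperConeMap (h₁ : ∀ n, i₁.f n ≫ p₁.f n = 0)
    (hfi : ∀ n, i₁.f n ≫ f n = e.f n ≫ i₂.f n)
    (hψd : ∀ n, C₁.d n (n + 1) ≫ ψ (n + 1) = -(ψ n ≫ A₂.d (n + 1) (n + 1 + 1)))
    (hψfac : ∀ n, p₁.f n ≫ ψ n ≫ i₂.f (n + 1)
      = B₁.d n (n + 1) ≫ f (n + 1) - f n ≫ B₂.d n (n + 1)) :
    paperCone i₁ ⟶ paperCone i₂ where
  f n := biprod.lift (biprod.fst ≫ f n) (biprod.fst ≫ p₁.f n ≫ ψ n + biprod.snd ≫ e.f (n + 1))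
  comm' n m hnm := by
    change n + 1 = m at hnm
    subst hnm
    dsimp only [paperCone]
    rw [of_d, of_d]
    apply biprod.hom_ext
    · simp only [Category.assoc, Preadditive.add_comp, Preadditive.comp_add, biprod.lift_fst,
        biprod.lift_fst_assoc, biprod.lift_snd_assoc, hψfac, ← hfi, Preadditive.comp_sub]
      abel
    · simp only [Category.assoc, Preadditive.add_comp, Preadditive.comp_add, biprod.lift_snd,
        biprod.lift_fst_assoc, biprod.lift_snd_assoc, Preadditive.comp_neg, Preadditive.neg_comp,
        hψd, ← p₁.comm_assoc, reassoc_of% (h₁ (n + 1)), e.comm, zero_comp, comp_zero]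
      abel

lemma paperConeMap_comp_paperConeP (h₁ : ∀ n, i₁.f n ≫ p₁.f n = 0)
    (hfi : ∀ n, i₁.f n ≫ f n = e.f n ≫ i₂.f n)
    (hψd : ∀ n, C₁.d n (n + 1) ≫ ψ (n + 1) = -(ψ n ≫ A₂.d (n + 1) (n + 1 + 1)))
    (hψfac : ∀ n, p₁.f n ≫ ψ n ≫ i₂.f (n + 1)
      = B₁.d n (n + 1) ≫ f (n + 1) - f n ≫ B₂.d n (n + 1))
    {C₂ : CochainComplex 𝒜 ℤ} {p₂ : B₂ ⟶ C₂} (h₂ : ∀ n, i₂.f n ≫ p₂.f n = 0) {g : C₁ ⟶ C₂}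
    (hpf : ∀ n, f n ≫ p₂.f n = p₁.f n ≫ g.f n) :
    paperConeMap h₁ hfi hψd hψfac ≫ paperConeP i₂ p₂ h₂ = paperConeP i₁ p₁ h₁ ≫ g := by
  ext n
  exact (biprod.lift_fst_assoc _ _ _).trans <| (Category.assoc _ _ _).trans <|
    (congrArg _ (hpf n)).trans (Category.assoc _ _ _).symm

end

lemma paperConeMap_comp_paperConeQ {A₁ B₁ C₁ A₂ B₂ : CochainComplex 𝒜 ℤ} {i₁ : A₁ ⟶ B₁}
    {p₁ : B₁ ⟶ C₁} {i₂ : A₂ ⟶ B₂} {e : A₁ ⟶ A₂} {f : ∀ n, B₁.X n ⟶ B₂.X n}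
    {ψ : C₁ ⟶ (CategoryTheory.shiftFunctor (CochainComplex 𝒜 ℤ) (1 : ℤ)).obj A₂}
    (h₁ : ∀ n, i₁.f n ≫ p₁.f n = 0) (hfi : ∀ n, i₁.f n ≫ f n = e.f n ≫ i₂.f n)
    (hψfac : ∀ n, p₁.f n ≫ ψ.f n ≫ i₂.f (n + 1)
      = B₁.d n (n + 1) ≫ f (n + 1) - f n ≫ B₂.d n (n + 1)) :
    paperConeMap h₁ hfi (shiftOne_hom_comm ψ) hψfac ≫ paperConeQ i₂
      = paperConeP i₁ p₁ h₁ ≫ ψ +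
        paperConeQ i₁ ≫ (CategoryTheory.shiftFunctor (CochainComplex 𝒜 ℤ) (1 : ℤ)).map e := by
  ext n
  exact (biprod.lift_snd _ _).trans (congrArg (· + _) (Category.assoc _ _ _).symm)

end CochainComplex

theorem stmt4_general [HasDerivedCategory 𝒜]
    (A₁ B₁ C₁ A₂ B₂ C₂ : CochainComplex 𝒜 ℤ)
    (i₁ : A₁ ⟶ B₁) (p₁ : B₁ ⟶ C₁) (i₂ : A₂ ⟶ B₂) (p₂ : B₂ ⟶ C₂)
    (h₁ : ∀ n : ℤ, i₁.f n ≫ p₁.f n = 0)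
    (h₂ : ∀ n : ℤ, i₂.f n ≫ p₂.f n = 0)
    (hS₁ : ∀ n : ℤ, (ShortComplex.mk (i₁.f n) (p₁.f n) (h₁ n)).ShortExact)
    (e : A₁ ⟶ A₂) (g : C₁ ⟶ C₂)
    (f : ∀ n : ℤ, B₁.X n ⟶ B₂.X n)
    (hfi : ∀ n : ℤ, i₁.f n ≫ f n = e.f n ≫ i₂.f n)
    (hpf : ∀ n : ℤ, f n ≫ p₂.f n = p₁.f n ≫ g.f n)
    -- ψ : C₁ ⟶ A₂[1] is the (unique) morphism of complexes with i₂ⁿ⁺¹ ∘ ψⁿ ∘ p₁ⁿ = φⁿ :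
    (ψ : C₁ ⟶ (CategoryTheory.shiftFunctor (CochainComplex 𝒜 ℤ) (1 : ℤ)).obj A₂)
    (hψfac : ∀ n : ℤ, p₁.f n ≫ ψ.f n ≫ i₂.f (n + 1)
      = B₁.d n (n + 1) ≫ f (n + 1) - f n ≫ B₂.d n (n + 1))
    -- the connecting morphisms in the derived category, characterized by δₖ ∘ pₖ′ = qₖ :
    (δ₁ : DerivedCategory.Q.obj C₁ ⟶
      DerivedCategory.Q.obj ((CategoryTheory.shiftFunctor (CochainComplex 𝒜 ℤ) (1 : ℤ)).obj A₁))
    (hδ₁ : DerivedCategory.Q.map (paperConeP i₁ p₁ h₁) ≫ δ₁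
      = DerivedCategory.Q.map (paperConeQ i₁))
    (δ₂ : DerivedCategory.Q.obj C₂ ⟶
      DerivedCategory.Q.obj ((CategoryTheory.shiftFunctor (CochainComplex 𝒜 ℤ) (1 : ℤ)).obj A₂))
    (hδ₂ : DerivedCategory.Q.map (paperConeP i₂ p₂ h₂) ≫ δ₂
      = DerivedCategory.Q.map (paperConeQ i₂)) :
    DerivedCategory.Q.map g ≫ δ₂ -
      δ₁ ≫ DerivedCategory.Q.map
        ((CategoryTheory.shiftFunctor (CochainComplex 𝒜 ℤ) (1 : ℤ)).map e)
      = DerivedCategory.Q.map ψ := by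
  have := CochainComplex.quasiIso_paperConeP i₁ p₁ h₁ hS₁
  have hP := congrArg DerivedCategory.Q.map <| CochainComplex.paperConeMap_comp_paperConeP h₁ hfi
    (CochainComplex.shiftOne_hom_comm ψ) hψfac h₂ hpf
  have hQ := congrArg DerivedCategory.Q.map <|
    CochainComplex.paperConeMap_comp_paperConeQ h₁ hfi hψfac
  simp only [Functor.map_comp, Functor.map_add] at hP hQ
  exact comp_sub_comp_eq_of_epi hδ₁ hδ₂ hP hQ

/-- In the diagram setup, let `δₖ : Cₖ → Aₖ[1]` (`k = 1, 2`) be the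
connecting morphism in the derived category `D(𝒜)` associated with the degreewise short
exact sequence `0 → Aₖ → Bₖ → Cₖ → 0`, i.e. the unique morphism in `D(𝒜)` with
`δₖ ∘ pₖ′ = qₖ`, where `pₖ′ : Cone(iₖ) → Cₖ` is the canonical quasi-isomorphism and
`qₖ : Cone(iₖ) → Aₖ[1]` the canonical projection.  Then, in `D(𝒜)`,
`δ₂ ∘ g − e[1] ∘ δ₁ = ψ` as morphisms `C₁ → A₂[1]`. -/
theorem stmt4 [HasDerivedCategory 𝒜]
    (A₁ B₁ C₁ A₂ B₂ C₂ : CochainComplex 𝒜 ℤ)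
    (i₁ : A₁ ⟶ B₁) (p₁ : B₁ ⟶ C₁) (i₂ : A₂ ⟶ B₂) (p₂ : B₂ ⟶ C₂)
    (h₁ : ∀ n : ℤ, i₁.f n ≫ p₁.f n = 0)
    (h₂ : ∀ n : ℤ, i₂.f n ≫ p₂.f n = 0)
    (hS₁ : ∀ n : ℤ, (ShortComplex.mk (i₁.f n) (p₁.f n) (h₁ n)).ShortExact)
    (hS₂ : ∀ n : ℤ, (ShortComplex.mk (i₂.f n) (p₂.f n) (h₂ n)).ShortExact)
    (e : A₁ ⟶ A₂) (g : C₁ ⟶ C₂)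
    (f : ∀ n : ℤ, B₁.X n ⟶ B₂.X n)
    (hfi : ∀ n : ℤ, i₁.f n ≫ f n = e.f n ≫ i₂.f n)
    (hpf : ∀ n : ℤ, f n ≫ p₂.f n = p₁.f n ≫ g.f n)
    -- ψ : C₁ ⟶ A₂[1] is the (unique) morphism of complexes with i₂ⁿ⁺¹ ∘ ψⁿ ∘ p₁ⁿ = φⁿ :
    (ψ : C₁ ⟶ (CategoryTheory.shiftFunctor (CochainComplex 𝒜 ℤ) (1 : ℤ)).obj A₂)
    (hψfac : ∀ n : ℤ, p₁.f n ≫ ψ.f n ≫ i₂.f (n + 1)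
      = B₁.d n (n + 1) ≫ f (n + 1) - f n ≫ B₂.d n (n + 1))
    -- the connecting morphisms in the derived category, characterized by δₖ ∘ pₖ′ = qₖ :
    (δ₁ : DerivedCategory.Q.obj C₁ ⟶
      DerivedCategory.Q.obj ((CategoryTheory.shiftFunctor (CochainComplex 𝒜 ℤ) (1 : ℤ)).obj A₁))
    (hδ₁ : DerivedCategory.Q.map (paperConeP i₁ p₁ h₁) ≫ δ₁
      = DerivedCategory.Q.map (paperConeQ i₁))
    (δ₂ : DerivedCategory.Q.obj C₂ ⟶
      DerivedCategory.Q.obj ((CategoryTheory.shiftFunctor (CochainComplex 𝒜 ℤ) (1 : ℤ)).obj A₂))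
    (hδ₂ : DerivedCategory.Q.map (paperConeP i₂ p₂ h₂) ≫ δ₂
      = DerivedCategory.Q.map (paperConeQ i₂)) :
    DerivedCategory.Q.map g ≫ δ₂ -
      δ₁ ≫ DerivedCategory.Q.map
        ((CategoryTheory.shiftFunctor (CochainComplex 𝒜 ℤ) (1 : ℤ)).map e)
      = DerivedCategory.Q.map ψ :=
  stmt4_general A₁ B₁ C₁ A₂ B₂ C₂ i₁ p₁ i₂ p₂ h₁ h₂ hS₁ e g f hfi hpf ψ hψfac δ₁ hδ₁ δ₂ hδ₂
end

section
/- Let N ≥ 1 be an integer. Suppose given abelian groups Z, V₁, V₂, P₁, P₂, W, V′ and homomorphisms a₁ : Z → V₁, e₁ : V₁ → P₁, c₁ : P₁ → W, d : W → V′, a₂ : Z → V₂, e₂ : V₂ → P₂, c₂ : P₂ → W, ρ : V₁ → V₂, σ : P₁ → P₂ such that: (i) e₁∘a₁ = 0, d∘c₁ = 0, the top row is exact at P₁ (ker c₁ = im e₁) and at W (ker d = im c₁); (ii) the bottom row is exact at V₂ (ker e₂ = im a₂) and at P₂ (ker c₂ = im e₂); (iii) the diagram commutes: a₂ = ρ∘a₁,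 e₂∘ρ = σ∘e₁, and c₂∘σ = c₁; (iv) V₁ is N-divisible (every element of V₁ is N times an element of V₁), and V₂ and V′ have no N-torsion. If x ∈ P₁ and y ∈ P₂ satisfy σ(x) = N·y, then there exists ℓ ∈ P₁ with N·ℓ = x and σ(ℓ) = y. -/
/-!
First lift the obstruction: `c₂ y` is killed by `d` because `N • d (c₂ y) = d (c₁ x) = 0` and `V′`
has no `N`-torsion, so `c₂ y = c₁ p` for some `p`. Subtracting `p` (and `N • p` from `x`) moves
the problem into the images of `V₁` and `V₂`, where it is solved by dividing by `N` in `V₁`,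
correcting by an element of `Z`, and using that `V₂` has no `N`-torsion.
-/

section DiagramChase

variable {Z V₁ V₂ P₁ P₂ W V' : Type*}
  [AddCommGroup Z] [AddCommGroup V₁] [AddCommGroup V₂] [AddCommGroup P₁]
  [AddCommGroup P₂] [AddCommGroup W] [AddCommGroup V']

theorem exists_map_eq_of_map_eq_nsmul (N : ℕ) {c₁ : P₁ →+ W} {d : W →+ V'} {c₂ : P₂ →+ W}
    {σ : P₁ →+ P₂} (hexW : Function.Exact c₁ d) (hcomm : ∀ p, c₂ (σ p) = c₁ p)
    (htor : ∀ v : V', N • v = 0 → v = 0) {x : P₁} {y : P₂} (hxy : σ x = N • y) :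
    ∃ p, c₁ p = c₂ y := by
  refine (hexW (c₂ y)).mp (htor _ ?_)
  rw [← map_nsmul, ← map_nsmul, ← hxy, hcomm, hexW.apply_apply_eq_zero]

theorem exists_nsmul_map_eq_and_map_eq (N : ℕ) {a₁ : Z →+ V₁} {e₁ : V₁ →+ P₁} {a₂ : Z →+ V₂}
    {e₂ : V₂ →+ P₂} {ρ : V₁ →+ V₂} (hea : ∀ z, e₁ (a₁ z) = 0) (hexV₂ : Function.Exact a₂ e₂)
    (hcomm : ∀ z, a₂ z = ρ (a₁ z)) (hdiv : ∀ v : V₁, ∃ v', N • v' = v)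
    (htor : ∀ v : V₂, N • v = 0 → v = 0) {u : V₁} {v : V₂} (huv : e₂ (ρ u) = N • e₂ v) :
    ∃ u', N • e₁ u' = e₁ u ∧ ρ u' = v := by
  obtain ⟨z, hz⟩ := (hexV₂ (ρ u - N • v)).mp (by rw [map_sub, map_nsmul, huv, sub_self])
  obtain ⟨u', hu'⟩ := hdiv (u - a₁ z)
  refine ⟨u', ?_, sub_eq_zero.mp (htor _ ?_)⟩
  · rw [← map_nsmul, hu', map_sub, hea, sub_zero]
  · rw [smul_sub, ← map_nsmul, hu', map_sub, ← hcomm, hz, sub_sub_cancel, sub_self]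

end DiagramChase

theorem stmt8_general (N : ℕ)
    (Z V₁ V₂ P₁ P₂ W V' : Type*)
    [AddCommGroup Z] [AddCommGroup V₁] [AddCommGroup V₂] [AddCommGroup P₁]
    [AddCommGroup P₂] [AddCommGroup W] [AddCommGroup V']
    (a₁ : Z →+ V₁) (e₁ : V₁ →+ P₁) (c₁ : P₁ →+ W) (d : W →+ V')
    (a₂ : Z →+ V₂) (e₂ : V₂ →+ P₂) (c₂ : P₂ →+ W)
    (ρ : V₁ →+ V₂) (σ : P₁ →+ P₂)
    -- (i) the top row:
    (hea : ∀ z : Z, e₁ (a₁ z) = 0)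
    (hexP₁ : ∀ p : P₁, c₁ p = 0 ↔ ∃ v : V₁, e₁ v = p)
    (hexW : ∀ w : W, d w = 0 ↔ ∃ p : P₁, c₁ p = w)
    -- (ii) the bottom row:
    (hexV₂ : ∀ v : V₂, e₂ v = 0 ↔ ∃ z : Z, a₂ z = v)
    (hexP₂ : ∀ p : P₂, c₂ p = 0 ↔ ∃ v : V₂, e₂ v = p)
    -- (iii) commutativity:
    (hcomm₁ : ∀ z : Z, a₂ z = ρ (a₁ z))
    (hcomm₂ : ∀ v : V₁, e₂ (ρ v) = σ (e₁ v))
    (hcomm₃ : ∀ p : P₁, c₂ (σ p) = c₁ p)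
    -- (iv) divisibility and torsion-freeness:
    (hdiv : ∀ v : V₁, ∃ v' : V₁, N • v' = v)
    (htor₂ : ∀ v : V₂, N • v = 0 → v = 0)
    (htor' : ∀ v : V', N • v = 0 → v = 0)
    (x : P₁) (y : P₂) (hxy : σ x = N • y) :
    ∃ ℓ : P₁, N • ℓ = x ∧ σ ℓ = y := by
  obtain ⟨p, hp⟩ := exists_map_eq_of_map_eq_nsmul N hexW hcomm₃ htor' hxy
  obtain ⟨u, hu⟩ := (hexP₁ (x - N • p)).mp <| by
    rw [map_sub, map_nsmul, ← hcomm₃, hxy, map_nsmul, hp, sub_self]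
  obtain ⟨v, hv⟩ := (hexP₂ (y - σ p)).mp <| by rw [map_sub, hcomm₃, hp, sub_self]
  obtain ⟨u', hNu', hρu'⟩ := exists_nsmul_map_eq_and_map_eq N hea hexV₂ hcomm₁ hdiv htor₂
    (u := u) (v := v) <| by rw [hcomm₂, hu, hv, map_sub, hxy, map_nsmul, smul_sub]
  refine ⟨p + e₁ u', ?_, ?_⟩
  · rw [smul_add, hNu', hu, add_sub_cancel]
  · rw [map_add, ← hcomm₂, hρu', hv, add_sub_cancel]

/-- A diagram chase with abelian groups: given the two exact rows
`Z → V₁ → P₁ → W → V′` (exact at `P₁` and `W`, with `e₁∘a₁ = 0` and `d∘c₁ = 0`) and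
`Z → V₂ → P₂ → W` (exact at `V₂` and `P₂`), commuting via `ρ : V₁ → V₂`, `σ : P₁ → P₂`
(`a₂ = ρ∘a₁`, `e₂∘ρ = σ∘e₁`, `c₂∘σ = c₁`), with `V₁` `N`-divisible and `V₂`, `V′`
having no `N`-torsion: if `σ(x) = N·y`, then there is `ℓ ∈ P₁` with `N·ℓ = x` and
`σ(ℓ) = y`. -/
theorem stmt8 (N : ℕ) (hN : 1 ≤ N)
    (Z V₁ V₂ P₁ P₂ W V' : Type*)
    [AddCommGroup Z] [AddCommGroup V₁] [AddCommGroup V₂] [AddCommGroup P₁]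
    [AddCommGroup P₂] [AddCommGroup W] [AddCommGroup V']
    (a₁ : Z →+ V₁) (e₁ : V₁ →+ P₁) (c₁ : P₁ →+ W) (d : W →+ V')
    (a₂ : Z →+ V₂) (e₂ : V₂ →+ P₂) (c₂ : P₂ →+ W)
    (ρ : V₁ →+ V₂) (σ : P₁ →+ P₂)
    -- (i) the top row:
    (hea : ∀ z : Z, e₁ (a₁ z) = 0)
    (hdc : ∀ p : P₁, d (c₁ p) = 0)
    (hexP₁ : ∀ p : P₁, c₁ p = 0 ↔ ∃ v : V₁, e₁ v = p)
    (hexW : ∀ w : W, d w = 0 ↔ ∃ p : P₁, c₁ p = w)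
    -- (ii) the bottom row:
    (hexV₂ : ∀ v : V₂, e₂ v = 0 ↔ ∃ z : Z, a₂ z = v)
    (hexP₂ : ∀ p : P₂, c₂ p = 0 ↔ ∃ v : V₂, e₂ v = p)
    -- (iii) commutativity:
    (hcomm₁ : ∀ z : Z, a₂ z = ρ (a₁ z))
    (hcomm₂ : ∀ v : V₁, e₂ (ρ v) = σ (e₁ v))
    (hcomm₃ : ∀ p : P₁, c₂ (σ p) = c₁ p)
    -- (iv) divisibility and torsion-freeness:
    (hdiv : ∀ v : V₁, ∃ v' : V₁, N • v' = v)
    (htor₂ : ∀ v : V₂, N • v = 0 → v = 0)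
    (htor' : ∀ v : V', N • v = 0 → v = 0)
    (x : P₁) (y : P₂) (hxy : σ x = N • y) :
    ∃ ℓ : P₁, N • ℓ = x ∧ σ ℓ = y :=
  stmt8_general N Z V₁ V₂ P₁ P₂ W V' a₁ e₁ c₁ d a₂ e₂ c₂ ρ σ hea hexP₁ hexW hexV₂ hexP₂ hcomm₁
    hcomm₂ hcomm₃ hdiv htor₂ htor' x y hxy
end

section
/- Let R be a commutative ring and let 0 → R →ι E →π Q → 0 be a short exact sequence of R-modules admitting an R-linear splitting s : Q → E with π∘s = id_Q. Set e₀ = ι(1) ∈ E, and for k ≥ 1 let λ_s : Λ^{k−1}Q → Λ^k E be the composite of the induced map Λ^{k−1}s : Λ^{k−1}Q → Λ^{k−1}E with left exterior multiplication by e₀, so λ_s(q₁∧…∧q_{k−1}) = e₀ ∧ s(q₁) ∧ … ∧ s(q_{k−1}). Then: (i) λ_s is independent of the choice of splitting s; (ii) the sequence 0 → Λ^{k−1}Q →λ_s Λ^k E →Λ^kπ Λ^k Q → 0 is exact, where Λ^kπ is the map induced by π on k-th exterior powers. -/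
namespace Stmt9Aux

open ExteriorAlgebra

variable {R : Type*} [CommRing R]

theorem expow_induction {M : Type*} [AddCommGroup M] [Module R M]
    (C : ∀ _ : ℕ, ExteriorAlgebra R M → Prop)
    (halg : ∀ r : R, C 0 (algebraMap R (ExteriorAlgebra R M) r))
    (hmul : ∀ (n : ℕ) (m : M) (x : ExteriorAlgebra R M),
      x ∈ ⋀[R]^n M → C n x → C (n + 1) (ι R m * x))
    (hadd : ∀ (n : ℕ) (x y : ExteriorAlgebra R M), C n x → C n y → C n (x + y))
    (n : ℕ) : ∀ x ∈ ⋀[R]^n M, C n x := by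
  induction n with
  | zero =>
    intro x hx
    have hx' : x ∈ (LinearMap.range (ι R : M →ₗ[R] ExteriorAlgebra R M)) ^ 0 := hx
    rw [pow_zero, Submodule.mem_one] at hx'
    obtain ⟨r, rfl⟩ := hx'
    exact halg r
  | succ n ih =>
    intro x hx
    have hx' : x ∈ LinearMap.range (ι R : M →ₗ[R] ExteriorAlgebra R M) *
        (LinearMap.range (ι R : M →ₗ[R] ExteriorAlgebra R M)) ^ n := by
      rw [← pow_succ']; exact hx
    refine Submodule.mul_induction_on hx' ?_ (fun a b ha hb => hadd _ _ _ ha hb)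
    rintro m ⟨v, rfl⟩ y hy
    exact hmul n v y hy (ih y hy)

theorem mem_expow_zero {M : Type*} [AddCommGroup M] [Module R M] (r : R) :
    algebraMap R (ExteriorAlgebra R M) r ∈ ⋀[R]^0 M := by
  have h : ((⋀[R]^0 M : Submodule R (ExteriorAlgebra R M))) = 1 := pow_zero _
  rw [h, Submodule.mem_one]
  exact ⟨r, rfl⟩

theorem mul_mem_expow_succ {M : Type*} [AddCommGroup M] [Module R M] {n : ℕ} (m : M)
    {x : ExteriorAlgebra R M} (hx : x ∈ ⋀[R]^n M) : ι R m * x ∈ ⋀[R]^(n+1) M := by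
  have h : ((⋀[R]^(n+1) M : Submodule R (ExteriorAlgebra R M))) =
      LinearMap.range (ι R : M →ₗ[R] ExteriorAlgebra R M) *
        (LinearMap.range (ι R : M →ₗ[R] ExteriorAlgebra R M)) ^ n := pow_succ' _ _
  rw [h]
  exact Submodule.mul_mem_mul (LinearMap.mem_range_self _ _) hx

theorem map_mem_expow {M N : Type*} [AddCommGroup M] [Module R M] [AddCommGroup N] [Module R N]
    (f : M →ₗ[R] N) (n : ℕ) : ∀ x ∈ ⋀[R]^n M, map f x ∈ ⋀[R]^n N := by
  refine expow_induction (fun n x => map f x ∈ ⋀[R]^n N) ?_ ?_ ?_ n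
  · intro r; rw [AlgHom.commutes]; exact mem_expow_zero r
  · intro n m x _ hC
    rw [map_mul, map_apply_ι]
    exact mul_mem_expow_succ _ hC
  · intro n x y hx hy; rw [map_add]; exact add_mem hx hy

variable {E Q : Type*} [AddCommGroup E] [Module R E] [AddCommGroup Q] [Module R Q]

/-- Contraction with a dual element, as an operator on the exterior algebra. -/
noncomputable def D (ρ : E →ₗ[R] R) : ExteriorAlgebra R E →ₗ[R] ExteriorAlgebra R E :=
  CliffordAlgebra.contractLeft (Q := (0 : QuadraticForm R E)) ρ

theorem D_ι_mul (ρ : E →ₗ[R] R) (m : E) (x : ExteriorAlgebra R E) :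
    D ρ (ι R m * x) = ρ m • x - ι R m * D ρ x :=
  CliffordAlgebra.contractLeft_ι_mul (Q := (0 : QuadraticForm R E)) (d := ρ) m x

theorem D_algebraMap (ρ : E →ₗ[R] R) (r : R) :
    D ρ (algebraMap R (ExteriorAlgebra R E) r) = 0 :=
  CliffordAlgebra.contractLeft_algebraMap (Q := (0 : QuadraticForm R E)) ρ r

theorem D_map_eq_zero (s : Q →ₗ[R] E) (ρ : E →ₗ[R] R) (hρs : ∀ q, ρ (s q) = 0)
    (n : ℕ) : ∀ x ∈ ⋀[R]^n Q, D ρ (map s x) = 0 := by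
  refine expow_induction (fun n x => D ρ (map s x) = 0) ?_ ?_ ?_ n
  · intro r; rw [AlgHom.commutes]; exact D_algebraMap ρ r
  · intro n q x _ hC
    rw [map_mul, map_apply_ι, D_ι_mul, hρs, hC, zero_smul, mul_zero, sub_zero]
  · intro n x y hx hy; rw [map_add, map_add, hx, hy, add_zero]

theorem indep_aux (e₀ : E) (s s' : Q →ₗ[R] E)
    (hdiff : ∀ q : Q, ∃ r : R, s q = s' q + r • e₀)
    (n : ℕ) : ∀ x ∈ ⋀[R]^n Q, ι R e₀ * map s x = ι R e₀ * map s' x := by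
  refine expow_induction (fun n x => ι R e₀ * map s x = ι R e₀ * map s' x) ?_ ?_ ?_ n
  · intro r; rw [AlgHom.commutes, AlgHom.commutes]
  · intro n q x _ hC
    obtain ⟨r, hr⟩ := hdiff q
    have h0 : ι R e₀ * (ι R e₀ * map s x) = 0 := by rw [← mul_assoc, ι_sq_zero, zero_mul]
    have hsw : ι R e₀ * ι R (s' q) = -(ι R (s' q) * ι R e₀) :=
      eq_neg_of_add_eq_zero_left (ι_add_mul_swap e₀ (s' q))
    calc ι R e₀ * map s (ι R q * x)
        = ι R e₀ * (ι R (s' q) * map s x) + r • (ι R e₀ * (ι R e₀ * map s x)) := by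
          rw [map_mul, map_apply_ι, hr, map_add, map_smul, add_mul, mul_add, smul_mul_assoc,
            mul_smul_comm]
      _ = -(ι R (s' q) * (ι R e₀ * map s x)) := by
          rw [h0, smul_zero, add_zero, ← mul_assoc, hsw, neg_mul, mul_assoc]
      _ = -(ι R (s' q) * (ι R e₀ * map s' x)) := by rw [hC]
      _ = ι R e₀ * map s' (ι R q * x) := by
          rw [map_mul, map_apply_ι]
          conv_rhs => rw [← mul_assoc, hsw, neg_mul, mul_assoc]
  · intro n x y hx hy
    rw [map_add, map_add, mul_add, mul_add, hx, hy]

theorem decomp_aux (j : R →ₗ[R] E) (π : E →ₗ[R] Q) (s : Q →ₗ[R] E)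
    (ρ : E →ₗ[R] R) (hρ : ∀ m : E, ρ m • j 1 + s (π m) = m)
    (n : ℕ) : ∀ y ∈ ⋀[R]^(n+1) E, ∃ A ∈ ⋀[R]^n Q, ∃ B ∈ ⋀[R]^(n+1) Q,
      y = ι R (j 1) * map s A + map s B := by
  induction n with
  | zero =>
    intro y hy
    have hy' : y ∈ (LinearMap.range (ι R : E →ₗ[R] ExteriorAlgebra R E)) ^ 1 := hy
    rw [pow_one] at hy'
    obtain ⟨m, rfl⟩ := hy'
    refine ⟨algebraMap R _ (ρ m), mem_expow_zero _, ι R (π m), ?_, ?_⟩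
    · have h : ((⋀[R]^1 Q : Submodule R (ExteriorAlgebra R Q)))
          = LinearMap.range (ι R : Q →ₗ[R] ExteriorAlgebra R Q) := pow_one _
      rw [h]; exact LinearMap.mem_range_self _ _
    · rw [AlgHom.commutes, map_apply_ι]
      have h1 : ι R m = ρ m • ι R (j 1) + ι R (s (π m)) := by
        rw [← map_smul, ← map_add, hρ m]
      rw [h1, ← Algebra.commutes, ← Algebra.smul_def]
  | succ n ih =>
    intro y hy
    have hy' : y ∈ LinearMap.range (ι R : E →ₗ[R] ExteriorAlgebra R E) *
        (LinearMap.range (ι R : E →ₗ[R] ExteriorAlgebra R E)) ^ (n+1) := by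
      rw [← pow_succ']; exact hy
    refine Submodule.mul_induction_on hy' ?_ ?_
    · rintro _ ⟨m, rfl⟩ w hw
      obtain ⟨A, hA, B, hB, rfl⟩ := ih w hw
      refine ⟨ρ m • B - ι R (π m) * A,
        sub_mem (Submodule.smul_mem _ _ hB) (mul_mem_expow_succ _ hA),
        ι R (π m) * B, mul_mem_expow_succ _ hB, ?_⟩
      have hm : ι R m = ρ m • ι R (j 1) + ι R (s (π m)) := by
        rw [← map_smul, ← map_add, hρ m]
      have hsw : ι R (s (π m)) * ι R (j 1) = -(ι R (j 1) * ι R (s (π m))) :=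
        eq_neg_of_add_eq_zero_left (ι_add_mul_swap (s (π m)) (j 1))
      have e1 : ι R (j 1) * (ι R (j 1) * map s A) = 0 := by
        rw [← mul_assoc, ι_sq_zero, zero_mul]
      have e2 : ι R (s (π m)) * (ι R (j 1) * map s A)
          = -(ι R (j 1) * (ι R (s (π m)) * map s A)) := by
        rw [← mul_assoc, hsw, neg_mul, mul_assoc]
      rw [map_sub, map_smul, map_mul, map_mul, map_apply_ι, hm]
      simp only [add_mul, mul_add, mul_sub, smul_mul_assoc, mul_smul_comm, e1, e2,
        smul_zero, zero_add, mul_zero, add_zero]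
      abel
    · rintro x y ⟨A, hA, B, hB, rfl⟩ ⟨A', hA', B', hB', rfl⟩
      refine ⟨A + A', add_mem hA hA', B + B', add_mem hB hB', ?_⟩
      rw [map_add, map_add, mul_add]
      abel

end Stmt9Aux

open Stmt9Aux ExteriorAlgebra


/-- Let `0 → R →ⱼ E →π Q → 0` be a short exact sequence of `R`-modules
admitting a linear splitting `s` (`π ∘ s = id`).  Set `e₀ = j 1 ∈ E`, and for `k ≥ 0`
let `λ_s : ⋀^k Q → ⋀^(k+1) E` be the composite of the induced map `⋀^k s` with left
exterior multiplication by `e₀` (realized inside the exterior algebra as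
`x ↦ ι e₀ * (Λ s) x`, so `λ_s (q₁ ∧ … ∧ q_k) = e₀ ∧ s q₁ ∧ … ∧ s q_k`).  Then:
(i) `λ_s` is independent of the choice of splitting `s`; and
(ii) the sequence `0 → ⋀^k Q → ⋀^(k+1) E → ⋀^(k+1) Q → 0` is exact, where the last map
is the one induced by `π` on exterior powers. -/
theorem stmt9 {R E Q : Type*} [CommRing R] [AddCommGroup E] [Module R E]
    [AddCommGroup Q] [Module R Q]
    (j : R →ₗ[R] E) (π : E →ₗ[R] Q)
    (hj : Function.Injective j) (hπ : Function.Surjective π)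
    (hexact : ∀ x : E, π x = 0 ↔ ∃ r : R, j r = x)
    (k : ℕ) :
    -- (i) independence of the splitting:
    (∀ s s' : Q →ₗ[R] E, π ∘ₗ s = LinearMap.id → π ∘ₗ s' = LinearMap.id →
      ∀ x ∈ ⋀[R]^k Q,
        ExteriorAlgebra.ι R (j 1) * ExteriorAlgebra.map s x
          = ExteriorAlgebra.ι R (j 1) * ExteriorAlgebra.map s' x) ∧
    -- (ii) exactness of 0 → ⋀^k Q → ⋀^(k+1) E → ⋀^(k+1) Q → 0:
    (∀ s : Q →ₗ[R] E, π ∘ₗ s = LinearMap.id →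
      -- λ_s maps ⋀^k Q into ⋀^(k+1) E:
      (∀ x ∈ ⋀[R]^k Q,
        ExteriorAlgebra.ι R (j 1) * ExteriorAlgebra.map s x ∈ ⋀[R]^(k + 1) E) ∧
      -- ⋀^(k+1) π maps ⋀^(k+1) E into ⋀^(k+1) Q:
      (∀ y ∈ ⋀[R]^(k + 1) E, ExteriorAlgebra.map π y ∈ ⋀[R]^(k + 1) Q) ∧
      -- injectivity of λ_s:
      (∀ x ∈ ⋀[R]^k Q,
        ExteriorAlgebra.ι R (j 1) * ExteriorAlgebra.map s x = 0 → x = 0) ∧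
      -- exactness in the middle: ker (⋀^(k+1) π) = im (λ_s) inside ⋀^(k+1) E:
      (∀ y ∈ ⋀[R]^(k + 1) E, (ExteriorAlgebra.map π y = 0 ↔
        ∃ x ∈ ⋀[R]^k Q, ExteriorAlgebra.ι R (j 1) * ExteriorAlgebra.map s x = y)) ∧
      -- surjectivity of ⋀^(k+1) π:
      (∀ z ∈ ⋀[R]^(k + 1) Q, ∃ y ∈ ⋀[R]^(k + 1) E, ExteriorAlgebra.map π y = z)) := by
  
  have hjr : ∀ r : R, j r = r • j 1 := fun r => by rw [← map_smul, smul_eq_mul, mul_one]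
  have hπe : π (j 1) = 0 := (hexact _).mpr ⟨1, rfl⟩
  have hπs : ∀ (s : Q →ₗ[R] E), π ∘ₗ s = LinearMap.id → ∀ q, π (s q) = q := by
    intro s hs q
    have h := LinearMap.ext_iff.mp hs q
    simpa using h
  constructor
  · intro s s' hs hs' x hx
    refine indep_aux (j 1) s s' ?_ k x hx
    intro q
    have h0 : π (s q - s' q) = 0 := by rw [map_sub, hπs s hs, hπs s' hs', sub_self]
    obtain ⟨r, hr⟩ := (hexact _).mp h0
    refine ⟨r, ?_⟩
    rw [← hjr r, hr]
    abel
  · intro s hs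
    set f : E →ₗ[R] E := LinearMap.id - s ∘ₗ π with hfdef
    have hmem : ∀ x : E, f x ∈ LinearMap.range j := by
      intro x
      rw [LinearMap.mem_range]
      refine (hexact _).mp ?_
      simp only [hfdef, LinearMap.sub_apply, LinearMap.id_apply, LinearMap.comp_apply]
      rw [map_sub, hπs s hs, sub_self]
    set ρ : E →ₗ[R] R := (LinearEquiv.ofInjective j hj).symm.toLinearMap ∘ₗ
      LinearMap.codRestrict (LinearMap.range j) f hmem with hρdef
    have hjρ : ∀ m : E, j (ρ m) = m - s (π m) := by
      intro m
      have h1 : j (ρ m) = ((LinearEquiv.ofInjective j (h := hj)) (ρ m) : E) :=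
        (LinearEquiv.ofInjective_apply j (h := hj) (ρ m)).symm
      rw [h1, hρdef]
      simp only [LinearMap.comp_apply, LinearEquiv.coe_coe]
      rw [LinearEquiv.apply_symm_apply]
      simp [hfdef]
    have hρ : ∀ m : E, ρ m • j 1 + s (π m) = m := by
      intro m; rw [← hjr, hjρ]; abel
    have hρs : ∀ q, ρ (s q) = 0 := by
      intro q
      apply hj
      rw [hjρ, hπs s hs, sub_self, map_zero]
    have hρe : ρ (j 1) = 1 := by
      apply hj
      rw [hjρ, hπe, map_zero, sub_zero]
    have hmapπs : ∀ x : ExteriorAlgebra R Q,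
        ExteriorAlgebra.map π (ExteriorAlgebra.map s x) = x := by
      intro x
      have hcomp : (ExteriorAlgebra.map π).comp (ExteriorAlgebra.map s)
          = ExteriorAlgebra.map (π ∘ₗ s) := map_comp_map s π
      calc ExteriorAlgebra.map π (ExteriorAlgebra.map s x)
          = ((ExteriorAlgebra.map π).comp (ExteriorAlgebra.map s)) x := rfl
        _ = ExteriorAlgebra.map (π ∘ₗ s) x := by rw [hcomp]
        _ = x := by rw [hs, map_id]; rfl
    have hpil : ∀ a : ExteriorAlgebra R Q,
        ExteriorAlgebra.map π (ExteriorAlgebra.ι R (j 1) * ExteriorAlgebra.map s a) = 0 := by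
      intro a
      rw [map_mul, map_apply_ι, hπe, map_zero, zero_mul]
    refine ⟨?_, ?_, ?_, ?_, ?_⟩
    · intro x hx
      exact mul_mem_expow_succ _ (map_mem_expow s k x hx)
    · intro y hy
      exact map_mem_expow π (k+1) y hy
    · intro x hx h0
      have hD := congrArg (D ρ) h0
      rw [map_zero, D_ι_mul, D_map_eq_zero s ρ hρs k x hx, mul_zero, sub_zero, hρe,
        one_smul] at hD
      have h2 := congrArg (ExteriorAlgebra.map π) hD
      rw [hmapπs, map_zero] at h2
      exact h2
    · intro y hy
      constructor
      · intro h0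
        obtain ⟨A, hA, B, hB, rfl⟩ := decomp_aux j π s ρ hρ k y hy
        have hB0 : B = 0 := by
          rw [map_add, hpil, hmapπs, zero_add] at h0
          exact h0
        refine ⟨A, hA, ?_⟩
        rw [hB0, map_zero, add_zero]
      · rintro ⟨x, hx, rfl⟩
        exact hpil x
    · intro z hz
      exact ⟨ExteriorAlgebra.map s z, map_mem_expow s (k+1) z hz, hmapπs z⟩
end
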